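/- arXiv:2004.12361 — 3 statements merged into one kernel-verified Lean document; each statement's English description precedes it below -/
import Mathlib

section
/- Scalar Fréchet bound: for nonnegative reals a_c, b_c (within-class variances) and α, β (between-class variances) and weights p_c ≥ 0 summing to 1, (√(Σ_c p_c a_c + α) − √(Σ_c p_c b_c + β))² ≤ Σ_c p_c (√a_c − √b_c)² + (√α − √β)². Equivalently, 2√((Σ_c p_c a_c + α)(Σ_c p_c b_c + β)) ≥ 2(Σ_c p_c √(a_c b_c) + √(αβ)). -/
/-- scalar Fréchet bound: for nonnegative within-class variances
`a c, b c`, between-class variances `α, β`, and convex weights `p`,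
`(√(Σ p a + α) - √(Σ p b + β))² ≤ Σ_c p_c (√a_c - √b_c)² + (√α - √β)²`;
equivalently `2√((Σ p a + α)(Σ p b + β)) ≥ 2(Σ_c p_c √(a_c b_c) + √(αβ))`. -/
theorem scalar_frechet_bound
    {C : Type*} [Fintype C] (a b : C → ℝ) (α β : ℝ)
    (ha : ∀ c, 0 ≤ a c) (hb : ∀ c, 0 ≤ b c) (hα : 0 ≤ α) (hβ : 0 ≤ β)
    (p : C → ℝ) (hp0 : ∀ c, 0 ≤ p c) (hp1 : ∑ c, p c = 1) :
    (Real.sqrt (∑ c, p c * a c + α) - Real.sqrt (∑ c, p c * b c + β)) ^ 2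
      ≤ ∑ c, p c * (Real.sqrt (a c) - Real.sqrt (b c)) ^ 2
        + (Real.sqrt α - Real.sqrt β) ^ 2
    ∧ 2 * (∑ c, p c * Real.sqrt (a c * b c) + Real.sqrt (α * β))
      ≤ 2 * Real.sqrt ((∑ c, p c * a c + α) * (∑ c, p c * b c + β)) := by
  set X := ∑ c, p c * a c + α with hXdef
  set Y := ∑ c, p c * b c + β with hYdef
  have hXnn : 0 ≤ X := add_nonneg (Finset.sum_nonneg fun c _ => mul_nonneg (hp0 c) (ha c)) hα
  have hYnn : 0 ≤ Y := add_nonneg (Finset.sum_nonneg fun c _ => mul_nonneg (hp0 c) (hb c)) hβ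
  -- Cauchy–Schwarz over `Option C`
  have key : ∑ c, p c * Real.sqrt (a c * b c) + Real.sqrt (α * β) ≤ Real.sqrt (X * Y) := by
    have f : Option C → ℝ := fun o => o.elim α fun c => p c * a c
    have CS := Real.sum_sqrt_mul_sqrt_le (f := fun o : Option C => o.elim α fun c => p c * a c)
      (g := fun o : Option C => o.elim β fun c => p c * b c) Finset.univ
      (fun o => by cases o with
        | none => exact hα
        | some c => exact mul_nonneg (hp0 c) (ha c))
      (fun o => by cases o with
        | none => exact hβ
        | some c => exact mul_nonneg (hp0 c) (hb c))
    rw [Fintype.sum_option, Fintype.sum_option, Fintype.sum_option] at CS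
    simp only [Option.elim] at CS
    have hterm : ∀ c, Real.sqrt (p c * a c) * Real.sqrt (p c * b c)
        = p c * Real.sqrt (a c * b c) := by
      intro c
      rw [← Real.sqrt_mul (mul_nonneg (hp0 c) (ha c))]
      have : p c * a c * (p c * b c) = p c ^ 2 * (a c * b c) := by ring
      rw [this, Real.sqrt_mul (sq_nonneg _), Real.sqrt_sq (hp0 c)]
    have hαβ : Real.sqrt α * Real.sqrt β = Real.sqrt (α * β) := (Real.sqrt_mul hα β).symm
    rw [hαβ] at CS
    simp only [hterm] at CS
    calc ∑ c, p c * Real.sqrt (a c * b c) + Real.sqrt (α * β)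
        = Real.sqrt (α * β) + ∑ c, p c * Real.sqrt (a c * b c) := by ring
      _ ≤ Real.sqrt (α + ∑ c, p c * a c) * Real.sqrt (β + ∑ c, p c * b c) := CS
      _ = Real.sqrt X * Real.sqrt Y := by rw [hXdef, hYdef, add_comm α, add_comm β]
      _ = Real.sqrt (X * Y) := (Real.sqrt_mul hXnn Y).symm
  refine ⟨?_, by linarith⟩
  -- expand the squares
  have eX : Real.sqrt X ^ 2 = X := Real.sq_sqrt hXnn
  have eY : Real.sqrt Y ^ 2 = Y := Real.sq_sqrt hYnn
  have eXY : Real.sqrt X * Real.sqrt Y = Real.sqrt (X * Y) := (Real.sqrt_mul hXnn Y).symm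
  have hsum : ∑ c, p c * (Real.sqrt (a c) - Real.sqrt (b c)) ^ 2
      = ∑ c, p c * a c + ∑ c, p c * b c - 2 * ∑ c, p c * Real.sqrt (a c * b c) := by
    have hterm : ∀ c ∈ Finset.univ, p c * (Real.sqrt (a c) - Real.sqrt (b c)) ^ 2
        = p c * a c + p c * b c - 2 * (p c * Real.sqrt (a c * b c)) := by
      intro c _
      have e1 : Real.sqrt (a c) ^ 2 = a c := Real.sq_sqrt (ha c)
      have e2 : Real.sqrt (b c) ^ 2 = b c := Real.sq_sqrt (hb c)
      have e3 : Real.sqrt (a c) * Real.sqrt (b c) = Real.sqrt (a c * b c) :=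
        (Real.sqrt_mul (ha c) (b c)).symm
      have e4 : (Real.sqrt (a c) - Real.sqrt (b c)) ^ 2
          = a c + b c - 2 * Real.sqrt (a c * b c) := by
        linear_combination e1 + e2 - 2 * e3
      rw [e4]; ring
    rw [Finset.sum_congr rfl hterm, Finset.sum_sub_distrib, Finset.sum_add_distrib,
      ← Finset.mul_sum]
  have eα : Real.sqrt α ^ 2 = α := Real.sq_sqrt hα
  have eβ : Real.sqrt β ^ 2 = β := Real.sq_sqrt hβ
  have eαβ : Real.sqrt α * Real.sqrt β = Real.sqrt (α * β) := (Real.sqrt_mul hα β).symm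
  have lhs_eq : (Real.sqrt X - Real.sqrt Y) ^ 2 = X + Y - 2 * Real.sqrt (X * Y) := by
    linear_combination eX + eY - 2 * eXY
  have rhs_eq : (Real.sqrt α - Real.sqrt β) ^ 2 = α + β - 2 * Real.sqrt (α * β) := by
    linear_combination eα + eβ - 2 * eαβ
  rw [lhs_eq, hsum, rhs_eq, hXdef, hYdef]
  linarith [key]
end

section
/- FID is bounded by the sum of the between-class and within-class FIDs in the commuting case: if for distributions R and G the between-class covariances Σ^R_B, Σ^G_B and all within-class covariances Σ^R_{W,c}, Σ^G_{W,c} form a commuting family of positive semidefinite matrices, then FID = ||μ^R − μ^G||² + Tr(Σ^R + Σ^G − 2(Σ^R Σ^G)^{1/2}) ≤ BCFID + WCFID, where Σ^E = Σ^E_B + Σ_c p(c) Σ^E_{W,c}, BCFID = ||μ^R − μ^G||² + Tr(Σ^R_B + Σ^G_B − 2(Σ^R_B Σ^G_B)^{1/2}), and WCFID = Σ_c p(c)[||μ^R_c − μ^G_c||² + Tr(Σ^R_{W,c} + Σ^G_{W,c} − 2(Σ^R_{W,c} Σ^G_{W,c})^{1/2})]. -/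
/-- The positive semidefinite square root of a positive semidefinite matrix
(the definition removed from Mathlib, restored with its old meaning). -/
noncomputable def Matrix.PosSemidef.sqrt {n 𝕜 : Type*} [Fintype n] [RCLike 𝕜] [PartialOrder 𝕜] [DecidableEq n]
    {A : Matrix n n 𝕜} (hA : A.PosSemidef) : Matrix n n 𝕜 :=
  hA.1.eigenvectorUnitary.1 * Matrix.diagonal ((↑) ∘ Real.sqrt ∘ hA.1.eigenvalues) *
  (star hA.1.eigenvectorUnitary : Matrix n n 𝕜)

/-!
For commuting positive semidefinite matrices `√(AB) = √A √B`, and `(A, B) ↦ √(AB)` is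
superadditive on commuting pairs: writing `a = √A`, `b = √B`, `c = √A'`, `d = √B'`, the Lagrange
identity gives `(A + A')(B + B') = (ab + cd)² + (ad - cb)² ≥ (ab + cd)²`, and the square root is
monotone, so `√(AB) + √(A'B') ≤ √((A + A')(B + B'))`. Applied to
`Σ^E = Σ^E_B + ∑_c p(c) Σ^E_{W,c}` and traced, this bounds the cross term of the FID below by
those of the BCFID and the WCFID; the mean terms of the FID and the BCFID coincide and those of
the WCFID are nonnegative.
-/

open scoped MatrixOrder ComplexOrder

open scoped IsMulCommutative in
theorem lagrange_identity_of_commute {R : Type*} [Ring R] {a b c d : R}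
    (hab : Commute a b) (hac : Commute a c) (had : Commute a d)
    (hbc : Commute b c) (hbd : Commute b d) (hcd : Commute c d) :
    (a * a + c * c) * (b * b + d * d)
      = (a * b + c * d) * (a * b + c * d) + (a * d - c * b) * (a * d - c * b) := by
  let S : Subring R := Subring.closure {a, b, c, d}
  have : IsMulCommutative S := Subring.isMulCommutative_closure (by
    simp only [Set.mem_insert_iff, Set.mem_singleton_iff]
    rintro x (rfl | rfl | rfl | rfl) y (rfl | rfl | rfl | rfl) <;>
      first | rfl | exact Commute.eq ‹_› | exact (Commute.symm ‹_›).eq)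
  have mem : ∀ x ∈ ({a, b, c, d} : Set R), x ∈ S := fun x hx ↦ Subring.subset_closure hx
  have key (a b c d : S) : (a * a + c * c) * (b * b + d * d)
      = (a * b + c * d) * (a * b + c * d) + (a * d - c * b) * (a * d - c * b) := by ring
  simpa using congrArg Subtype.val
    (key ⟨a, mem a (by simp)⟩ ⟨b, mem b (by simp)⟩ ⟨c, mem c (by simp)⟩ ⟨d, mem d (by simp)⟩)

namespace Matrix

variable {m 𝕜 ι : Type*} [Fintype m] [RCLike 𝕜]

lemma trace_le_trace_of_le {X Y : Matrix m m 𝕜} (h : X ≤ Y) : X.trace ≤ Y.trace := by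
  simpa [trace_sub, sub_nonneg] using (le_iff.mp h).trace_nonneg

variable [DecidableEq m]

/- Operator monotonicity of the square root (`CFC.sqrt_le_sqrt` needs a C⋆-algebra, which real
matrices are not). For an eigenvector `v` of `Y - X` with eigenvalue `l`, symmetrising
`2 (Y² - X²) = (Y + X)(Y - X) + (Y - X)(Y + X)` gives `0 ≤ v⋆(Y² - X²)v = l · v⋆(Y + X)v`,
while `l = v⋆Yv - v⋆Xv`; hence `l ≥ 0`. -/
lemma le_of_mul_self_le_mul_self {X Y : Matrix m m 𝕜} (hX : 0 ≤ X) (hY : 0 ≤ Y)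
    (h : X * X ≤ Y * Y) : X ≤ Y := by
  have hD : (Y - X).IsHermitian :=
    (nonneg_iff_posSemidef.mp hY).1.sub (nonneg_iff_posSemidef.mp hX).1
  rw [le_iff, hD.posSemidef_iff_eigenvalues_nonneg]
  intro i
  set v := ⇑(hD.eigenvectorBasis i)
  set l := hD.eigenvalues i
  set q : Matrix m m 𝕜 → ℝ := fun M ↦ RCLike.re (star v ⬝ᵥ M *ᵥ v) with hq
  have hDv : (Y - X) *ᵥ v = l • v := hD.mulVec_eigenvectorBasis i
  have hl : l = q Y - q X := by
    simp only [l, hq, hD.eigenvalues_eq, sub_mulVec, dotProduct_sub, map_sub]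
    rfl
  have hsym : (Y + X) * (Y - X) + (Y - X) * (Y + X) = (2 : 𝕜) • (Y * Y - X * X) := by
    rw [two_smul]; noncomm_ring
  have h₁ : star v ⬝ᵥ ((Y + X) * (Y - X)) *ᵥ v = l • (star v ⬝ᵥ (Y + X) *ᵥ v) := by
    rw [← mulVec_mulVec, hDv, mulVec_smul, dotProduct_smul]
  have h₂ : star v ⬝ᵥ ((Y - X) * (Y + X)) *ᵥ v = l • (star v ⬝ᵥ (Y + X) *ᵥ v) := by
    rw [← mulVec_mulVec, dotProduct_mulVec, ← hD.eq, ← star_mulVec, hDv, star_smul, star_trivial,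
      smul_dotProduct]
  have hquad : q (Y * Y - X * X) = l * (q Y + q X) := by
    have := congrArg RCLike.re (congrArg (star v ⬝ᵥ · *ᵥ v) hsym)
    simp only [add_mulVec, dotProduct_add, h₁, h₂, smul_mulVec, dotProduct_smul] at this
    simp only [smul_add, map_add, RCLike.smul_re, smul_eq_mul, RCLike.mul_re, RCLike.ofNat_re,
      RCLike.ofNat_im, zero_mul, sub_zero, hq] at this ⊢
    linarith
  have hqD : 0 ≤ q (Y * Y - X * X) := (le_iff.mp h).re_dotProduct_nonneg v
  have hqX : 0 ≤ q X := (nonneg_iff_posSemidef.mp hX).re_dotProduct_nonneg v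
  have hqY : 0 ≤ q Y := (nonneg_iff_posSemidef.mp hY).re_dotProduct_nonneg v
  change 0 ≤ l
  nlinarith

lemma commute_cfcSqrt_left {A B : Matrix m m 𝕜} (h : Commute A B) : Commute (CFC.sqrt A) B :=
  h.cfcₙ_nnreal _

lemma commute_cfcSqrt_cfcSqrt {A B : Matrix m m 𝕜} (h : Commute A B) :
    Commute (CFC.sqrt A) (CFC.sqrt B) :=
  (commute_cfcSqrt_left (commute_cfcSqrt_left h).symm).symm

lemma mul_nonneg_of_commute {A B : Matrix m m 𝕜} (hA : 0 ≤ A) (hB : 0 ≤ B) (h : Commute A B) :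
    0 ≤ A * B := by
  have hsa : star (CFC.sqrt A) = CFC.sqrt A := (CFC.sqrt_nonneg A).isSelfAdjoint.star_eq
  have hconj : A * B = star (CFC.sqrt A) * B * CFC.sqrt A := by
    rw [hsa, mul_assoc, ← (commute_cfcSqrt_left h).eq, ← mul_assoc, CFC.sqrt_mul_sqrt_self A hA]
  rw [hconj]
  exact star_left_conjugate_nonneg hB _

lemma cfcSqrt_mul_of_commute {A B : Matrix m m 𝕜} (hA : 0 ≤ A) (hB : 0 ≤ B) (h : Commute A B) :
    CFC.sqrt (A * B) = CFC.sqrt A * CFC.sqrt B := by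
  have hc := commute_cfcSqrt_cfcSqrt h
  refine CFC.sqrt_unique ?_ (mul_nonneg_of_commute (CFC.sqrt_nonneg A) (CFC.sqrt_nonneg B) hc)
  rw [hc.symm.mul_mul_mul_comm, CFC.sqrt_mul_sqrt_self A hA, CFC.sqrt_mul_sqrt_self B hB]

lemma cfcSqrt_smul {A : Matrix m m 𝕜} (hA : 0 ≤ A) {r : ℝ} (hr : 0 ≤ r) :
    CFC.sqrt (r • A) = √r • CFC.sqrt A := by
  refine CFC.sqrt_unique ?_ (smul_nonneg (Real.sqrt_nonneg r) (CFC.sqrt_nonneg A))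
  rw [smul_mul_smul_comm, Real.mul_self_sqrt hr, CFC.sqrt_mul_sqrt_self A hA]

lemma cfcSqrt_smul_mul_smul {A B : Matrix m m 𝕜} (hAB : 0 ≤ A * B) {r : ℝ} (hr : 0 ≤ r) :
    CFC.sqrt ((r • A) * (r • B)) = r • CFC.sqrt (A * B) := by
  rw [smul_mul_smul_comm, cfcSqrt_smul hAB (mul_nonneg hr hr), Real.sqrt_mul_self hr]

lemma cfcSqrt_mul_add_cfcSqrt_mul_le {A B A' B' : Matrix m m 𝕜}
    (hA : 0 ≤ A) (hB : 0 ≤ B) (hA' : 0 ≤ A') (hB' : 0 ≤ B')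
    (hAB : Commute A B) (hAA' : Commute A A') (hAB' : Commute A B')
    (hA'B : Commute A' B) (hBB' : Commute B B') (hA'B' : Commute A' B') :
    CFC.sqrt (A * B) + CFC.sqrt (A' * B') ≤ CFC.sqrt ((A + A') * (B + B')) := by
  have hST : Commute (A + A') (B + B') := (hAB.add_right hAB').add_left (hA'B.add_right hA'B')
  have hab := commute_cfcSqrt_cfcSqrt hAB
  have hcd := commute_cfcSqrt_cfcSqrt hA'B'
  have had := commute_cfcSqrt_cfcSqrt hAB'
  have hcb := commute_cfcSqrt_cfcSqrt hA'B
  rw [cfcSqrt_mul_of_commute hA hB hAB, cfcSqrt_mul_of_commute hA' hB' hA'B']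
  set a := CFC.sqrt A
  set b := CFC.sqrt B
  set c := CFC.sqrt A'
  set d := CFC.sqrt B'
  refine le_of_mul_self_le_mul_self
    (add_nonneg (mul_nonneg_of_commute (CFC.sqrt_nonneg _) (CFC.sqrt_nonneg _) hab)
      (mul_nonneg_of_commute (CFC.sqrt_nonneg _) (CFC.sqrt_nonneg _) hcd))
    (CFC.sqrt_nonneg _) ?_
  have hsq : (A + A') * (B + B') = (a * a + c * c) * (b * b + d * d) := by
    rw [CFC.sqrt_mul_sqrt_self A hA, CFC.sqrt_mul_sqrt_self B hB, CFC.sqrt_mul_sqrt_self A' hA',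
      CFC.sqrt_mul_sqrt_self B' hB']
  have hsa : IsSelfAdjoint (a * d - c * b) := by
    refine .sub ?_ ?_
    · rw [IsSelfAdjoint, star_mul, (CFC.sqrt_nonneg A).isSelfAdjoint.star_eq,
        (CFC.sqrt_nonneg B').isSelfAdjoint.star_eq, had.eq]
    · rw [IsSelfAdjoint, star_mul, (CFC.sqrt_nonneg A').isSelfAdjoint.star_eq,
        (CFC.sqrt_nonneg B).isSelfAdjoint.star_eq, hcb.eq]
  rw [CFC.sqrt_mul_sqrt_self _ (mul_nonneg_of_commute (add_nonneg hA hA') (add_nonneg hB hB') hST),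
    hsq, lagrange_identity_of_commute hab (commute_cfcSqrt_cfcSqrt hAA') had hcb.symm
      (commute_cfcSqrt_cfcSqrt hBB') hcd]
  exact le_add_of_nonneg_right hsa.mul_self_nonneg

section CommutingFamily

variable {S : Set (Matrix m m 𝕜)} (hS : ∀ M ∈ S, ∀ N ∈ S, Commute M N) (s : Finset ι)
  {w : ι → ℝ} {A B : ι → Matrix m m 𝕜}
include hS

lemma sum_smul_cfcSqrt_mul_le (hw : ∀ i, 0 ≤ w i) (hA : ∀ i, 0 ≤ A i) (hB : ∀ i, 0 ≤ B i)
    (hAS : ∀ i, A i ∈ S) (hBS : ∀ i, B i ∈ S) :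
    ∑ i ∈ s, w i • CFC.sqrt (A i * B i)
      ≤ CFC.sqrt ((∑ i ∈ s, w i • A i) * (∑ i ∈ s, w i • B i)) := by
  classical
  have hAA i j : Commute (A i) (A j) := hS _ (hAS i) _ (hAS j)
  have hAB i j : Commute (A i) (B j) := hS _ (hAS i) _ (hBS j)
  have hBB i j : Commute (B i) (B j) := hS _ (hBS i) _ (hBS j)
  induction s using Finset.induction_on with
  | empty => simp
  | insert a s ha ih =>
    rw [Finset.sum_insert ha, Finset.sum_insert ha, Finset.sum_insert ha,
      ← cfcSqrt_smul_mul_smul (mul_nonneg_of_commute (hA a) (hB a) (hAB a a)) (hw a)]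
    refine (add_le_add_right ih _).trans (cfcSqrt_mul_add_cfcSqrt_mul_le
      (smul_nonneg (hw a) (hA a)) (smul_nonneg (hw a) (hB a))
      (Finset.sum_nonneg fun i _ ↦ smul_nonneg (hw i) (hA i))
      (Finset.sum_nonneg fun i _ ↦ smul_nonneg (hw i) (hB i))
      (((hAB a a).smul_left _).smul_right _)
      (Commute.sum_right _ _ _ fun i _ ↦ ((hAA a i).smul_left _).smul_right _)
      (Commute.sum_right _ _ _ fun i _ ↦ ((hAB a i).smul_left _).smul_right _)
      (Commute.sum_left _ _ _ fun i _ ↦ ((hAB i a).smul_left _).smul_right _)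
      (Commute.sum_right _ _ _ fun i _ ↦ ((hBB a i).smul_left _).smul_right _)
      (Commute.sum_left _ _ _ fun i _ ↦ Commute.sum_right _ _ _ fun j _ ↦
        ((hAB i j).smul_left _).smul_right _))

lemma cfcSqrt_mul_add_sum_smul_cfcSqrt_mul_le {A₀ B₀ : Matrix m m 𝕜} (hw : ∀ i, 0 ≤ w i)
    (hA₀ : 0 ≤ A₀) (hB₀ : 0 ≤ B₀) (hA : ∀ i, 0 ≤ A i) (hB : ∀ i, 0 ≤ B i)
    (hA₀S : A₀ ∈ S) (hB₀S : B₀ ∈ S) (hAS : ∀ i, A i ∈ S) (hBS : ∀ i, B i ∈ S) :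
    CFC.sqrt (A₀ * B₀) + ∑ i ∈ s, w i • CFC.sqrt (A i * B i)
      ≤ CFC.sqrt ((A₀ + ∑ i ∈ s, w i • A i) * (B₀ + ∑ i ∈ s, w i • B i)) := by
  have hsum {M : Matrix m m 𝕜} {F : ι → Matrix m m 𝕜} (hM : M ∈ S) (hF : ∀ i, F i ∈ S) :
      Commute M (∑ i ∈ s, w i • F i) :=
    Commute.sum_right _ _ _ fun i _ ↦ (hS _ hM _ (hF i)).smul_right _
  refine (add_le_add_right (sum_smul_cfcSqrt_mul_le hS s hw hA hB hAS hBS) _).trans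
    (cfcSqrt_mul_add_cfcSqrt_mul_le hA₀ hB₀
      (Finset.sum_nonneg fun i _ ↦ smul_nonneg (hw i) (hA i))
      (Finset.sum_nonneg fun i _ ↦ smul_nonneg (hw i) (hB i))
      (hS _ hA₀S _ hB₀S) (hsum hA₀S hAS) (hsum hA₀S hBS) (hsum hB₀S hAS).symm (hsum hB₀S hBS)
      (Commute.sum_left _ _ _ fun i _ ↦ (hsum (hAS i) hBS).smul_left _))

end CommutingFamily

lemma PosSemidef.sqrt_eq_cfcSqrt {A : Matrix m m ℝ} (hA : A.PosSemidef) :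
    hA.sqrt = CFC.sqrt A := by
  rw [CFC.sqrt_eq_real_sqrt A hA.nonneg, cfcₙ_eq_cfc, hA.1.cfc_eq]
  rfl

end Matrix

open Matrix in
theorem fid_le_bcfid_add_wcfid_general
    {n : ℕ} {C : Type*} [Fintype C]
    (p : C → ℝ) (hp0 : ∀ c, 0 ≤ p c)
    (muR muG : C → Fin n → ℝ)
    (SWR SWG : C → Matrix (Fin n) (Fin n) ℝ) (SBR SBG : Matrix (Fin n) (Fin n) ℝ)
    (hWR : ∀ c, (SWR c).PosSemidef) (hWG : ∀ c, (SWG c).PosSemidef)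
    (hBR : SBR.PosSemidef) (hBG : SBG.PosSemidef)
    (hcomm : ∀ M ∈ Set.range SWR ∪ Set.range SWG ∪ {SBR, SBG},
      ∀ N ∈ Set.range SWR ∪ Set.range SWG ∪ {SBR, SBG}, Commute M N)
    (hPT : ((SBR + ∑ c, p c • SWR c) * (SBG + ∑ c, p c • SWG c)).PosSemidef)
    (hPB : (SBR * SBG).PosSemidef)
    (hPW : ∀ c, (SWR c * SWG c).PosSemidef) :
    (∑ i, ((∑ c, p c • muR c) i - (∑ c, p c • muG c) i) ^ 2)
      + Matrix.trace ((SBR + ∑ c, p c • SWR c) + (SBG + ∑ c, p c • SWG c)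
          - (2 : ℝ) • hPT.sqrt)
    ≤ ((∑ i, ((∑ c, p c • muR c) i - (∑ c, p c • muG c) i) ^ 2)
        + Matrix.trace (SBR + SBG - (2 : ℝ) • hPB.sqrt))
      + ∑ c, p c * ((∑ i, (muR c i - muG c i) ^ 2)
        + Matrix.trace (SWR c + SWG c - (2 : ℝ) • (hPW c).sqrt)) := by
  have hcross := trace_le_trace_of_le (cfcSqrt_mul_add_sum_smul_cfcSqrt_mul_le hcomm Finset.univ
    hp0 hBR.nonneg hBG.nonneg (fun c ↦ (hWR c).nonneg) (fun c ↦ (hWG c).nonneg)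
    (by simp) (by simp) (fun c ↦ by simp) (fun c ↦ by simp))
  have hmean : 0 ≤ ∑ c, p c * ∑ i, (muR c i - muG c i) ^ 2 :=
    Finset.sum_nonneg fun c _ ↦ mul_nonneg (hp0 c) (by positivity)
  simp only [PosSemidef.sqrt_eq_cfcSqrt, trace_add, trace_sub, trace_smul, trace_sum, smul_eq_mul,
    mul_add, mul_sub, Finset.sum_add_distrib, Finset.sum_sub_distrib] at hcross ⊢
  simp only [← Finset.mul_sum, mul_left_comm (p _) 2] at hcross ⊢
  linarith

/-- `FID ≤ BCFID + WCFID` in the commuting case. For two distributions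
`R`, `G` with class weights `p`, class means `muR c`, `muG c` (overall means
`Σ_c p c • muR c`, `Σ_c p c • muG c`), within-class covariances `SWR c`, `SWG c` and
between-class covariances `SBR`, `SBG` forming a commuting family of PSD matrices, and
total covariances `Σ^E = Σ^E_B + Σ_c p(c) Σ^E_{W,c}` (law of total covariance):
`‖μ^R - μ^G‖² + Tr(Σ^R + Σ^G - 2(Σ^R Σ^G)^{1/2}) ≤ BCFID + WCFID`. -/
theorem fid_le_bcfid_add_wcfid
    {n : ℕ} {C : Type*} [Fintype C]
    (p : C → ℝ) (hp0 : ∀ c, 0 ≤ p c) (hp1 : ∑ c, p c = 1)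
    (muR muG : C → Fin n → ℝ)
    (SWR SWG : C → Matrix (Fin n) (Fin n) ℝ) (SBR SBG : Matrix (Fin n) (Fin n) ℝ)
    (hWR : ∀ c, (SWR c).PosSemidef) (hWG : ∀ c, (SWG c).PosSemidef)
    (hBR : SBR.PosSemidef) (hBG : SBG.PosSemidef)
    (hcomm : ∀ M ∈ Set.range SWR ∪ Set.range SWG ∪ {SBR, SBG},
      ∀ N ∈ Set.range SWR ∪ Set.range SWG ∪ {SBR, SBG}, Commute M N)
    (hPT : ((SBR + ∑ c, p c • SWR c) * (SBG + ∑ c, p c • SWG c)).PosSemidef)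
    (hPB : (SBR * SBG).PosSemidef)
    (hPW : ∀ c, (SWR c * SWG c).PosSemidef) :
    (∑ i, ((∑ c, p c • muR c) i - (∑ c, p c • muG c) i) ^ 2)
      + Matrix.trace ((SBR + ∑ c, p c • SWR c) + (SBG + ∑ c, p c • SWG c)
          - (2 : ℝ) • hPT.sqrt)
    ≤ ((∑ i, ((∑ c, p c • muR c) i - (∑ c, p c • muG c) i) ^ 2)
        + Matrix.trace (SBR + SBG - (2 : ℝ) • hPB.sqrt))
      + ∑ c, p c * ((∑ i, (muR c i - muG c i) ^ 2)
        + Matrix.trace (SWR c + SWG c - (2 : ℝ) • (hPW c).sqrt)) :=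
  fid_le_bcfid_add_wcfid_general p hp0 muR muG SWR SWG SBR SBG hWR hWG hBR hBG hcomm hPT hPB hPW
end

section
/- Tightness of the FID bound: if in addition μ^R_c = μ^G_c for all classes c, and the matrices are simultaneously diagonal with the property that for each coordinate d exactly one of the variance sources {σ^E_{W,c,d}}_c ∪ {σ^E_{B,d}} is nonzero and this nonzero source has the same index for E = R and E = G, then FID = BCFID + WCFID. -/
/-- tightness of the FID bound. In the simultaneously diagonal case,
with diagonal within-class variances `sWR c d, sWG c d` and between-class variances
`sBR d, sBG d`, if `μ^R_c = μ^G_c` for all classes and for each coordinate `d` exactly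
one of the variance sources (`between`, or `within class c₀`) is nonzero, with the same
index for `R` and `G`, then `FID = BCFID + WCFID`. -/
theorem fid_eq_bcfid_add_wcfid_of_tight
    {n : ℕ} {C : Type*} [Fintype C]
    (p : C → ℝ) (hp0 : ∀ c, 0 ≤ p c) (hp1 : ∑ c, p c = 1)
    (muR muG : C → Fin n → ℝ) (hmu : ∀ c, muR c = muG c)
    (sWR sWG : C → Fin n → ℝ) (sBR sBG : Fin n → ℝ)
    (hWR0 : ∀ c d, 0 ≤ sWR c d) (hWG0 : ∀ c d, 0 ≤ sWG c d)
    (hBR0 : ∀ d, 0 ≤ sBR d) (hBG0 : ∀ d, 0 ≤ sBG d)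
    (hone : ∀ d,
      (∃ c0, sBR d = 0 ∧ sBG d = 0 ∧ sWR c0 d ≠ 0 ∧ sWG c0 d ≠ 0 ∧
        ∀ c, c ≠ c0 → sWR c d = 0 ∧ sWG c d = 0) ∨
      (sBR d ≠ 0 ∧ sBG d ≠ 0 ∧ ∀ c, sWR c d = 0 ∧ sWG c d = 0)) :
    (∑ i, ((∑ c, p c • muR c) i - (∑ c, p c • muG c) i) ^ 2)
      + (∑ d, ((sBR d + ∑ c, p c * sWR c d) + (sBG d + ∑ c, p c * sWG c d)
          - 2 * Real.sqrt ((sBR d + ∑ c, p c * sWR c d) * (sBG d + ∑ c, p c * sWG c d))))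
    = ((∑ i, ((∑ c, p c • muR c) i - (∑ c, p c • muG c) i) ^ 2)
        + ∑ d, (sBR d + sBG d - 2 * Real.sqrt (sBR d * sBG d)))
      + ∑ c, p c * ((∑ i, (muR c i - muG c i) ^ 2)
        + ∑ d, (sWR c d + sWG c d - 2 * Real.sqrt (sWR c d * sWG c d))) := by
  have hmean : ∀ c, (∑ i, (muR c i - muG c i) ^ 2) = 0 := by
    intro c; rw [hmu c]; simp
  simp only [hmean, zero_add]
  have key : ∀ d, ((sBR d + ∑ c, p c * sWR c d) + (sBG d + ∑ c, p c * sWG c d)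
      - 2 * Real.sqrt ((sBR d + ∑ c, p c * sWR c d) * (sBG d + ∑ c, p c * sWG c d)))
      = (sBR d + sBG d - 2 * Real.sqrt (sBR d * sBG d))
        + ∑ c, p c * (sWR c d + sWG c d - 2 * Real.sqrt (sWR c d * sWG c d)) := by
    intro d
    rcases hone d with ⟨c0, hBR, hBG, _, _, hrest⟩ | ⟨_, _, hW⟩
    · have hR : (∑ c, p c * sWR c d) = p c0 * sWR c0 d := by
        apply Finset.sum_eq_single
        · intro c _ hc; rw [(hrest c hc).1, mul_zero]
        · intro h; exact absurd (Finset.mem_univ c0) h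
      have hG : (∑ c, p c * sWG c d) = p c0 * sWG c0 d := by
        apply Finset.sum_eq_single
        · intro c _ hc; rw [(hrest c hc).2, mul_zero]
        · intro h; exact absurd (Finset.mem_univ c0) h
      have hS : (∑ c, p c * (sWR c d + sWG c d - 2 * Real.sqrt (sWR c d * sWG c d)))
          = p c0 * (sWR c0 d + sWG c0 d - 2 * Real.sqrt (sWR c0 d * sWG c0 d)) := by
        apply Finset.sum_eq_single
        · intro c _ hc
          rw [(hrest c hc).1, (hrest c hc).2]; simp
        · intro h; exact absurd (Finset.mem_univ c0) h
      rw [hR, hG, hS, hBR, hBG]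
      have hsq : Real.sqrt (p c0 * sWR c0 d * (p c0 * sWG c0 d))
          = p c0 * Real.sqrt (sWR c0 d * sWG c0 d) := by
        have : p c0 * sWR c0 d * (p c0 * sWG c0 d) = p c0 ^ 2 * (sWR c0 d * sWG c0 d) := by
          ring
        rw [this, Real.sqrt_mul (sq_nonneg _), Real.sqrt_sq (hp0 c0)]
      rw [zero_add, zero_add, hsq]
      simp
      ring
    · have hR : (∑ c, p c * sWR c d) = 0 := by
        apply Finset.sum_eq_zero; intro c _; rw [(hW c).1, mul_zero]
      have hG : (∑ c, p c * sWG c d) = 0 := by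
        apply Finset.sum_eq_zero; intro c _; rw [(hW c).2, mul_zero]
      have hS : (∑ c, p c * (sWR c d + sWG c d - 2 * Real.sqrt (sWR c d * sWG c d))) = 0 := by
        apply Finset.sum_eq_zero; intro c _; rw [(hW c).1, (hW c).2]; simp
      rw [hR, hG, hS, add_zero, add_zero, add_zero]
  rw [Finset.sum_congr rfl (fun d _ => key d), Finset.sum_add_distrib, Finset.sum_comm]
  simp only [Finset.mul_sum]
  ring
end
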